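/- Let N, H be positive integers and let f: ℕ→ℂ satisfy f(n) = 0 unless N < n ≤ 2N. Then ∫_{−1/(2H)}^{1/(2H)} |f̂(β)|² dβ ≤ (π/2)⁴ · H^{−4} · ∫_0^1 |f̂(β)|² |û(β)|⁴ dβ, where f̂(β) = Σ_{N<n≤2N} f(n) e(nβ) and û(β) = Σ_{m=1}^{H} e(mβ). -/

import Mathlib

open Finset Real

/-- `e(α) = e^{2πiα}`. -/
noncomputable def eR (α : ℝ) : ℂ := Complex.exp (2 * Real.pi * Complex.I * α)

/-
On the arc `|β| ≤ 1/(2H)` the Dirichlet kernel satisfies `|û(β)| = |sin(πHβ)| / |sin(πβ)| ≥ 2H/π`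
(Jordan's inequality `|sin x| ≥ (2/π)|x|` for `|x| ≤ π/2` in the numerator, `|sin x| ≤ |x|` in
the denominator), so `(π/2)⁴ H⁻⁴ |û|⁴ ≥ 1` there. Multiplying the integrand by this factor and
enlarging the arc to a full period of the nonnegative, 1-periodic integrand gives the inequality.
-/

theorem Function.Periodic.intervalIntegral_le_of_nonneg {g : ℝ → ℝ} {T a b : ℝ}
    (hg : Function.Periodic g T) (hg0 : ∀ x, 0 ≤ g x)
    (hgi : IntervalIntegrable g MeasureTheory.volume a (a + T)) (hab : a ≤ b) (hb : b ≤ a + T) :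
    ∫ x in a..b, g x ≤ ∫ x in 0..T, g x := by
  calc ∫ x in a..b, g x ≤ ∫ x in a..a + T, g x :=
        intervalIntegral.integral_mono_interval le_rfl hab hb
          (Filter.Eventually.of_forall hg0) hgi
    _ = ∫ x in 0..T, g x := by simpa using hg.intervalIntegral_add_eq a 0

theorem intervalIntegral_le_mul_integral_mul_of_one_le_mul {F W : ℝ → ℝ} {T a b C : ℝ}
    (hF : Continuous F) (hW : Continuous W) (hF0 : ∀ x, 0 ≤ F x) (hW0 : ∀ x, 0 ≤ W x)
    (hper : Function.Periodic (fun x => F x * W x) T) (hab : a ≤ b) (hb : b ≤ a + T)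
    (hC : 0 ≤ C) (hCW : ∀ x ∈ Set.Icc a b, 1 ≤ C * W x) :
    ∫ x in a..b, F x ≤ C * ∫ x in 0..T, F x * W x := by
  have hFW : Continuous fun x => F x * W x := hF.mul hW
  calc ∫ x in a..b, F x ≤ ∫ x in a..b, C * (F x * W x) :=
        intervalIntegral.integral_mono_on hab (hF.intervalIntegrable _ _)
          ((continuous_const.mul hFW).intervalIntegrable _ _) fun x hx => by
            nlinarith [hF0 x, hCW x hx]
    _ = C * ∫ x in a..b, F x * W x := intervalIntegral.integral_const_mul C _
    _ ≤ C * ∫ x in 0..T, F x * W x := by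
        gcongr
        exact hper.intervalIntegral_le_of_nonneg (fun x => mul_nonneg (hF0 x) (hW0 x))
          (hFW.intervalIntegrable _ _) hab hb

theorem eR_eq_exp (α : ℝ) : eR α = Complex.exp (Complex.I * (2 * π * α : ℝ)) := by
  rw [eR]; push_cast; ring_nf

@[fun_prop]
theorem continuous_eR : Continuous eR := by
  unfold eR; fun_prop

theorem norm_eR (α : ℝ) : ‖eR α‖ = 1 := by
  rw [eR_eq_exp, Complex.norm_exp_I_mul_ofReal]

theorem norm_eR_sub_one (α : ℝ) : ‖eR α - 1‖ = 2 * |sin (π * α)| := by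
  rw [eR_eq_exp, Complex.norm_exp_I_mul_ofReal_sub_one, norm_mul, Real.norm_eq_abs,
    Real.norm_eq_abs, abs_two]
  ring_nf

theorem eR_add_one (α : ℝ) : eR (α + 1) = eR α := by
  rw [eR, eR, Complex.ofReal_add, Complex.ofReal_one, mul_add, mul_one, Complex.exp_add,
    Complex.exp_two_pi_mul_I, mul_one]

theorem eR_natCast_mul (n : ℕ) (β : ℝ) : eR (n * β) = eR β ^ n := by
  rw [eR, eR, ← Complex.exp_nat_mul]; push_cast; ring_nf

theorem norm_sum_Icc_eR_eq (H : ℕ) {β : ℝ} (hβ : sin (π * β) ≠ 0) :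
    ‖∑ m ∈ Icc 1 H, eR (m * β)‖ = |sin (π * (H * β))| / |sin (π * β)| := by
  have h1 : eR β ≠ 1 := fun h => by
    have := norm_eR_sub_one β
    rw [h, sub_self, norm_zero] at this
    exact hβ (abs_eq_zero.mp (by linarith))
  have hgeom : ∑ m ∈ Icc 1 H, eR (m * β) = eR β * (eR β ^ H - 1) / (eR β - 1) := by
    simp only [eR_natCast_mul]
    rw [← Finset.Ico_add_one_right_eq_Icc, geom_sum_Ico h1 (by omega)]
    ring
  rw [hgeom, norm_div, norm_mul, norm_eR, one_mul, ← eR_natCast_mul, norm_eR_sub_one,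
    norm_eR_sub_one, mul_div_mul_left _ _ two_ne_zero]

theorem two_mul_div_pi_le_norm_sum_Icc_eR {H : ℕ} (hH : 0 < H) {β : ℝ} (hβ : 2 * H * |β| ≤ 1) :
    2 * H / π ≤ ‖∑ m ∈ Icc 1 H, eR (m * β)‖ := by
  rcases eq_or_ne β 0 with rfl | hβ0
  · simp only [mul_zero, eR, Complex.ofReal_zero, Complex.exp_zero, sum_const, Nat.card_Icc,
      add_tsub_cancel_right, nsmul_eq_mul, mul_one, Complex.norm_natCast]
    rw [div_le_iff₀ pi_pos]
    nlinarith [pi_gt_three, (Nat.cast_nonneg H : (0 : ℝ) ≤ H)]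
  have hH1 : (1 : ℝ) ≤ H := by exact_mod_cast hH
  have hβpos : 0 < |β| := abs_pos.mpr hβ0
  have hnum : 2 * H * |β| ≤ |sin (π * (H * β))| := by
    have := Real.mul_abs_le_abs_sin (x := π * (H * β)) (by
      rw [abs_mul, abs_mul, abs_of_pos pi_pos, Nat.abs_cast]; nlinarith [pi_pos])
    rw [abs_mul, abs_mul, abs_of_pos pi_pos, Nat.abs_cast] at this
    field_simp at this; simpa only [mul_assoc] using this
  have hden_pos : 0 < |sin (π * β)| := by
    have := Real.mul_abs_le_abs_sin (x := π * β) (by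
      rw [abs_mul, abs_of_pos pi_pos]; nlinarith [pi_pos, hβpos])
    rw [abs_mul, abs_of_pos pi_pos] at this
    field_simp at this; linarith
  have hden : |sin (π * β)| ≤ π * |β| := by
    simpa [abs_mul, abs_of_pos pi_pos] using Real.abs_sin_le_abs (x := π * β)
  rw [norm_sum_Icc_eR_eq H (abs_pos.mp hden_pos)]
  calc 2 * H / π = 2 * H * |β| / (π * |β|) := by field_simp
    _ ≤ |sin (π * (H * β))| / |sin (π * β)| := div_le_div₀ (abs_nonneg _) hnum hden_pos hden

theorem modified_gallagher_lemma_general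
    (N H : ℕ) (hH : 0 < H) (f : ℕ → ℂ) :
    (∫ β in (-(1 / (2 * (H : ℝ))))..(1 / (2 * (H : ℝ))),
        ‖∑ n ∈ Ioc N (2 * N), f n * eR (n * β)‖ ^ 2)
      ≤ (Real.pi / 2) ^ 4 / (H : ℝ) ^ 4 *
        ∫ β in (0 : ℝ)..1,
          ‖∑ n ∈ Ioc N (2 * N), f n * eR (n * β)‖ ^ 2 *
            ‖∑ m ∈ Icc 1 H, eR (m * β)‖ ^ 4 := by
  have hH1 : (1 : ℝ) ≤ H := Nat.one_le_cast.mpr hH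
  have harc_pos : 0 < 1 / (2 * (H : ℝ)) := by positivity
  have harc_le : 1 / (2 * (H : ℝ)) ≤ 1 / 2 := one_div_le_one_div_of_le two_pos (by linarith)
  refine intervalIntegral_le_mul_integral_mul_of_one_le_mul (by fun_prop) (by fun_prop)
    (fun _ => by positivity) (fun _ => by positivity)
    (fun β => by simp only [eR_natCast_mul, eR_add_one]) ?_ ?_ (by positivity) ?_
  · linarith
  · linarith
  · intro β hβ
    have hU := two_mul_div_pi_le_norm_sum_Icc_eR hH (β := β) (by
      rw [← le_div_iff₀' (by positivity)]; exact abs_le.mpr hβ)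
    calc (1 : ℝ) = (π / 2) ^ 4 / H ^ 4 * (2 * H / π) ^ 4 := by field_simp
      _ ≤ (π / 2) ^ 4 / H ^ 4 * ‖∑ m ∈ Icc 1 H, eR (m * β)‖ ^ 4 := by gcongr

theorem modified_gallagher_lemma
    (N H : ℕ) (hN : 0 < N) (hH : 0 < H) (f : ℕ → ℂ)
    (hsupp : ∀ n : ℕ, f n ≠ 0 → N < n ∧ n ≤ 2 * N) :
    (∫ β in (-(1 / (2 * (H : ℝ))))..(1 / (2 * (H : ℝ))),
        ‖∑ n ∈ Ioc N (2 * N), f n * eR (n * β)‖ ^ 2)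
      ≤ (Real.pi / 2) ^ 4 / (H : ℝ) ^ 4 *
        ∫ β in (0 : ℝ)..1,
          ‖∑ n ∈ Ioc N (2 * N), f n * eR (n * β)‖ ^ 2 *
            ‖∑ m ∈ Icc 1 H, eR (m * β)‖ ^ 4 :=
  modified_gallagher_lemma_general N H hH f
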